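/- In the five-point example, a stochastic attack strictly beats all deterministic attacks in the maximin game: with 𝒳 = 𝒴 = {0,1,2,3,4}, P_{X,Y} uniform on {(0,0),(2,2),(4,4)}, distortion d(x,z)=|x−z| with limit ε=1, the maximin value over randomized perturbation channels equals the binary entropy h₂(1/3), while the maximin value over deterministic perturbation maps g with |x − g(x,y)| ≤ 1 equals (2/3)·log 2, and (2/3)·log 2 < h₂(1/3). -/

import Mathlib

open scoped BigOperators

/-- The data distribution: uniform on `{(0,0), (2,2), (4,4)} ⊆ {0,…,4}²`. -/
noncomputable def Pex : Fin 5 × Fin 5 → ℝ := fun a =>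
  if a = (0, 0) ∨ a = (2, 2) ∨ a = (4, 4) then 1/3 else 0

/-- `r` is a perturbation channel `P_{Z|X,Y}`. -/
def IsChannel (r : Fin 5 × Fin 5 → Fin 5 → ℝ) : Prop :=
  (∀ a z, 0 ≤ r a z) ∧ ∀ a, ∑ z, r a z = 1

/-- Joint law of `(Y, Z)` induced by `Pex` and channel `r`. -/
noncomputable def jointYZ (r : Fin 5 × Fin 5 → Fin 5 → ℝ) : Fin 5 × Fin 5 → ℝ :=
  fun a => ∑ x, Pex (x, a.1) * r (x, a.1) a.2

/-- Joint law of `(Y, Z)` induced by `Pex` and a deterministic perturbation `g`. -/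
noncomputable def jointYZdet (g : Fin 5 × Fin 5 → Fin 5) : Fin 5 × Fin 5 → ℝ :=
  fun a => ∑ x, if g (x, a.1) = a.2 then Pex (x, a.1) else 0

/-- Conditional entropy `H(Y|Z)` of a joint law on `𝒴 × 𝒵 = Fin 5 × Fin 5`. -/
noncomputable def condEntYZ (j : Fin 5 × Fin 5 → ℝ) : ℝ :=
  -∑ a, j a * Real.log (j a / ∑ y, j (y, a.2))

/-- Binary entropy function (natural log). -/
noncomputable def h2 (p : ℝ) : ℝ := -p * Real.log p - (1 - p) * Real.log (1 - p)

/-!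
On the support `x = y ∈ {0, 2, 4}` an attack of distortion at most `1` can confuse labels only
through `z = 1` (between `0` and `2`) and `z = 3` (between `2` and `4`), so `H(Y|Z)` is the sum
of the entropies of these two columns. Gibbs' inequality against the reference law `(2/3, 1/3)`
bounds this sum by `h₂(1/3)`, which is attained by sending `2` to `1` or `3` with probability
`1/2` each. A deterministic attack sends `2` to one side only, so one of the two columns carries a
single label and the other has mass at most `2/3`, whence `(2/3) log 2`. Finally
`(2/3) h₂(1/2) < h₂(1/3)` by strict concavity of `h₂`.
-/

open Real Finset

theorem h2_eq_binEntropy (p : ℝ) : h2 p = binEntropy p := by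
  simp only [h2, binEntropy, log_inv]
  ring

theorem two_thirds_mul_log_two_lt_h2_third : 2 / 3 * log 2 < h2 (1 / 3) := by
  have h := strictConcave_binEntropy.2 (show (2⁻¹ : ℝ) ∈ Set.Icc 0 1 by norm_num)
    (show (0 : ℝ) ∈ Set.Icc 0 1 by norm_num) (by norm_num) (show (0 : ℝ) < 2 / 3 by norm_num)
    (show (0 : ℝ) < 1 / 3 by norm_num) (by norm_num)
  rw [h2_eq_binEntropy, ← binEntropy_two_inv]
  norm_num at h ⊢
  exact h

/-- The contribution to `H(Y|Z)` of a value of `Z` shared by two labels of masses `b` and `c`. -/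
noncomputable def pairEntropy (b c : ℝ) : ℝ :=
  -(b * log (b / (b + c))) - c * log (c / (b + c))

theorem pairEntropy_comm (b c : ℝ) : pairEntropy b c = pairEntropy c b := by
  rw [pairEntropy, pairEntropy, add_comm c b]
  ring

theorem pairEntropy_zero_left (c : ℝ) : pairEntropy 0 c = 0 := by
  simp [pairEntropy]

theorem pairEntropy_mul_mul_one_sub (t p : ℝ) (ht : t ≠ 0) :
    pairEntropy (t * p) (t * (1 - p)) = t * h2 p := by
  have hsum : t * p + t * (1 - p) = t := by ring
  rw [pairEntropy, hsum, mul_div_cancel_left₀ _ ht, mul_div_cancel_left₀ _ ht, h2]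
  ring

theorem pairEntropy_self (b : ℝ) : pairEntropy b b = 2 * b * log 2 := by
  rcases eq_or_ne b 0 with rfl | hb
  · simp [pairEntropy]
  have h := pairEntropy_mul_mul_one_sub (2 * b) 2⁻¹ (by positivity)
  rw [h2_eq_binEntropy, binEntropy_two_inv] at h
  convert h using 2 <;> ring

theorem neg_mul_log_div_le {x t q : ℝ} (hx : 0 ≤ x) (hxt : x ≤ t) (hq : 0 < q) :
    -(x * log (x / t)) ≤ -(x * log q) + (q * t - x) := by
  rcases hx.eq_or_lt with rfl | hx
  · simpa using mul_nonneg hq.le hxt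
  have ht : 0 < t := hx.trans_le hxt
  have key : x * log (q * t / x) ≤ x * (q * t / x - 1) :=
    mul_le_mul_of_nonneg_left (log_le_sub_one_of_pos (by positivity)) hx.le
  rw [log_div (by positivity) hx.ne', log_mul hq.ne' ht.ne'] at key
  rw [log_div hx.ne' ht.ne']
  have : x * (q * t / x - 1) = q * t - x := by field_simp
  linarith

theorem pairEntropy_le_crossEntropy {b c p q : ℝ} (hb : 0 ≤ b) (hc : 0 ≤ c) (hp : 0 < p)
    (hq : 0 < q) (hpq : p + q = 1) :
    pairEntropy b c ≤ -(b * log p) - c * log q := by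
  have hB := neg_mul_log_div_le hb (le_add_of_nonneg_right hc) hp
  have hC := neg_mul_log_div_le hc (le_add_of_nonneg_left hb) hq
  have : p * (b + c) - b + (q * (b + c) - c) = 0 := by linear_combination (b + c) * hpq
  rw [pairEntropy]
  linarith

theorem pairEntropy_le_mul_log_two {b c : ℝ} (hb : 0 ≤ b) (hc : 0 ≤ c) :
    pairEntropy b c ≤ (b + c) * log 2 := by
  have h := pairEntropy_le_crossEntropy hb hc (p := 2⁻¹) (q := 2⁻¹) (by norm_num) (by norm_num)
    (by norm_num)
  rw [log_inv] at h
  linarith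

theorem Pex_ne_zero {x y : Fin 5} (h : Pex (x, y) ≠ 0) :
    x = y ∧ x ∈ ({0, 2, 4} : Finset (Fin 5)) := by
  unfold Pex at h
  split_ifs at h with hxy
  · rcases hxy with hxy | hxy | hxy <;> simp_all [Prod.ext_iff]
  · exact absurd rfl h

theorem Pex_diag_of_mem {y : Fin 5} (hy : y ∈ ({0, 2, 4} : Finset (Fin 5))) :
    Pex (y, y) = 1 / 3 := by
  simp only [mem_insert, mem_singleton] at hy
  rcases hy with rfl | rfl | rfl <;> simp [Pex]

theorem Pex_diag_of_notMem {y : Fin 5} (hy : y ∉ ({0, 2, 4} : Finset (Fin 5))) :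
    Pex (y, y) = 0 := by
  by_contra h
  exact hy (Pex_ne_zero h).2

theorem jointYZ_apply (r : Fin 5 × Fin 5 → Fin 5 → ℝ) (y z : Fin 5) :
    jointYZ r (y, z) = Pex (y, y) * r (y, y) z := by
  refine Fintype.sum_eq_single y fun x hxy => ?_
  by_contra h
  exact hxy (Pex_ne_zero (left_ne_zero_of_mul h)).1

/-- Only the columns `z = 1` and `z = 3` can mix two labels. -/
theorem condEntYZ_eq_pairEntropy_add_pairEntropy (j : Fin 5 × Fin 5 → ℝ)
    (hj : ∀ y z : Fin 5, y ∉ ({0, 2, 4} : Finset (Fin 5)) ∨ 1 < |(y : ℤ) - (z : ℤ)| →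
      j (y, z) = 0) :
    condEntYZ j = pairEntropy (j (0, 1)) (j (2, 1)) + pairEntropy (j (2, 3)) (j (4, 3)) := by
  have h1 : ∀ z, j (1, z) = 0 := fun z => hj 1 z (Or.inl (by decide))
  have h3 : ∀ z, j (3, z) = 0 := fun z => hj 3 z (Or.inl (by decide))
  have far : ∀ y z : Fin 5, 1 < |(y : ℤ) - (z : ℤ)| → j (y, z) = 0 :=
    fun y z h => hj y z (Or.inr h)
  simp only [condEntYZ, Fintype.sum_prod_type, Fin.sum_univ_five, h1, h3,
    far 0 2 (by decide), far 0 3 (by decide), far 0 4 (by decide), far 2 0 (by decide),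
    far 2 4 (by decide), far 4 0 (by decide), far 4 1 (by decide), far 4 2 (by decide),
    zero_mul, add_zero, zero_add, log_div_self, mul_zero, pairEntropy]
  ring

def RespectsDistortion (r : Fin 5 × Fin 5 → Fin 5 → ℝ) : Prop :=
  ∀ x y z : Fin 5, 1 < |(x : ℤ) - (z : ℤ)| → Pex (x, y) * r (x, y) z = 0

theorem condEntYZ_jointYZ {r : Fin 5 × Fin 5 → Fin 5 → ℝ} (hd : RespectsDistortion r) :
    condEntYZ (jointYZ r) = pairEntropy (r (0, 0) 1 / 3) (r (2, 2) 1 / 3) +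
      pairEntropy (r (2, 2) 3 / 3) (r (4, 4) 3 / 3) := by
  rw [condEntYZ_eq_pairEntropy_add_pairEntropy]
  · simp only [jointYZ_apply, Pex_diag_of_mem (by decide : (0 : Fin 5) ∈ ({0, 2, 4} : Finset _)),
      Pex_diag_of_mem (by decide : (2 : Fin 5) ∈ ({0, 2, 4} : Finset _)),
      Pex_diag_of_mem (by decide : (4 : Fin 5) ∈ ({0, 2, 4} : Finset _)), one_div_mul_eq_div]
  · rintro y z (hy | hyz)
    · rw [jointYZ_apply, Pex_diag_of_notMem hy, zero_mul]
    · rw [jointYZ_apply, hd y y z hyz]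

theorem IsChannel.le_one {r : Fin 5 × Fin 5 → Fin 5 → ℝ} (hr : IsChannel r) (a : Fin 5 × Fin 5)
    (z : Fin 5) : r a z ≤ 1 :=
  hr.2 a ▸ single_le_sum (fun z _ => hr.1 a z) (mem_univ z)

theorem IsChannel.add_le_one {r : Fin 5 × Fin 5 → Fin 5 → ℝ} (hr : IsChannel r)
    (a : Fin 5 × Fin 5) {z z' : Fin 5} (hz : z ≠ z') : r a z + r a z' ≤ 1 := by
  rw [← hr.2 a, ← sum_pair hz]
  exact sum_le_sum_of_subset_of_nonneg (subset_univ _) fun z _ _ => hr.1 a z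

theorem condEntYZ_jointYZ_le_h2 {r : Fin 5 × Fin 5 → Fin 5 → ℝ} (hr : IsChannel r)
    (hd : RespectsDistortion r) : condEntYZ (jointYZ r) ≤ h2 (1 / 3) := by
  rw [condEntYZ_jointYZ hd, pairEntropy_comm (r (2, 2) 3 / 3)]
  have hb := pairEntropy_le_crossEntropy (p := 2 / 3) (q := 1 / 3)
    (div_nonneg (hr.1 (0, 0) 1) zero_le_three) (div_nonneg (hr.1 (2, 2) 1) zero_le_three)
    (by norm_num) (by norm_num) (by norm_num)
  have hf := pairEntropy_le_crossEntropy (p := 2 / 3) (q := 1 / 3)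
    (div_nonneg (hr.1 (4, 4) 3) zero_le_three) (div_nonneg (hr.1 (2, 2) 3) zero_le_three)
    (by norm_num) (by norm_num) (by norm_num)
  have hlog₁ : 0 ≤ -log (2 / 3 : ℝ) := neg_nonneg.2 (log_nonpos (by norm_num) (by norm_num))
  have hlog₂ : 0 ≤ -log (1 / 3 : ℝ) := neg_nonneg.2 (log_nonpos (by norm_num) (by norm_num))
  have h00 := hr.le_one (0, 0) 1
  have h44 := hr.le_one (4, 4) 3
  have h22 := hr.add_le_one (2, 2) (show (1 : Fin 5) ≠ 3 by decide)
  rw [h2, show (1 : ℝ) - 1 / 3 = 2 / 3 by norm_num]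
  nlinarith [mul_le_mul_of_nonneg_right (add_le_add h00 h44) hlog₁,
    mul_le_mul_of_nonneg_right h22 hlog₂]

theorem condEntYZ_jointYZ_le_of_eq_zero_or_eq_zero {r : Fin 5 × Fin 5 → Fin 5 → ℝ}
    (hr : IsChannel r) (hd : RespectsDistortion r) (h : r (2, 2) 1 = 0 ∨ r (2, 2) 3 = 0) :
    condEntYZ (jointYZ r) ≤ 2 / 3 * log 2 := by
  have hlog : 0 ≤ log (2 : ℝ) := log_nonneg one_le_two
  rw [condEntYZ_jointYZ hd]
  rcases h with h | h <;> rw [h, zero_div]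
  · rw [pairEntropy_comm, pairEntropy_zero_left, zero_add]
    have := pairEntropy_le_mul_log_two (div_nonneg (hr.1 (2, 2) 3) zero_le_three)
      (div_nonneg (hr.1 (4, 4) 3) zero_le_three)
    nlinarith [hr.le_one (2, 2) 3, hr.le_one (4, 4) 3]
  · rw [pairEntropy_zero_left, add_zero]
    have := pairEntropy_le_mul_log_two (div_nonneg (hr.1 (0, 0) 1) zero_le_three)
      (div_nonneg (hr.1 (2, 2) 1) zero_le_three)
    nlinarith [hr.le_one (0, 0) 1, hr.le_one (2, 2) 1]

def MapRespectsDistortion (g : Fin 5 × Fin 5 → Fin 5) : Prop :=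
  ∀ x y : Fin 5, Pex (x, y) ≠ 0 → |(x : ℤ) - (g (x, y) : ℤ)| ≤ 1

theorem mapRespectsDistortion_of_diag {g : Fin 5 × Fin 5 → Fin 5}
    (h : ∀ x ∈ ({0, 2, 4} : Finset (Fin 5)), |(x : ℤ) - (g (x, x) : ℤ)| ≤ 1) :
    MapRespectsDistortion g := by
  intro x y hxy
  obtain ⟨rfl, hx⟩ := Pex_ne_zero hxy
  exact h x hx

def detChannel (g : Fin 5 × Fin 5 → Fin 5) : Fin 5 × Fin 5 → Fin 5 → ℝ :=
  fun a z => if g a = z then 1 else 0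

theorem isChannel_detChannel (g : Fin 5 × Fin 5 → Fin 5) : IsChannel (detChannel g) :=
  ⟨fun a z => by unfold detChannel; split_ifs <;> norm_num,
    fun a => by simp [detChannel]⟩

theorem MapRespectsDistortion.detChannel {g : Fin 5 × Fin 5 → Fin 5}
    (hg : MapRespectsDistortion g) : RespectsDistortion (detChannel g) := by
  intro x y z hxz
  by_cases hP : Pex (x, y) = 0
  · rw [hP, zero_mul]
  · have hgz : g (x, y) ≠ z := by
      rintro rfl
      exact (hg x y hP).not_gt hxz
    simp [_root_.detChannel, hgz]

theorem jointYZdet_eq_jointYZ_detChannel (g : Fin 5 × Fin 5 → Fin 5) :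
    jointYZdet g = jointYZ (detChannel g) := by
  funext a
  refine sum_congr rfl fun x _ => ?_
  simp only [detChannel, mul_ite, mul_one, mul_zero]

theorem detChannel_eq_zero_or_eq_zero (g : Fin 5 × Fin 5 → Fin 5) (a : Fin 5 × Fin 5)
    {z z' : Fin 5} (hz : z ≠ z') : detChannel g a z = 0 ∨ detChannel g a z' = 0 := by
  by_cases h : g a = z
  · right
    simp [detChannel, h, hz]
  · left
    simp [detChannel, h]

theorem condEntYZ_jointYZdet_le {g : Fin 5 × Fin 5 → Fin 5} (hg : MapRespectsDistortion g) :
    condEntYZ (jointYZdet g) ≤ 2 / 3 * log 2 := by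
  rw [jointYZdet_eq_jointYZ_detChannel]
  exact condEntYZ_jointYZ_le_of_eq_zero_or_eq_zero (isChannel_detChannel g) hg.detChannel
    (detChannel_eq_zero_or_eq_zero g (2, 2) (by decide))

def gLeft : Fin 5 × Fin 5 → Fin 5 := fun a => if a.1 = 4 then 3 else 1

def gRight : Fin 5 × Fin 5 → Fin 5 := fun a => if a.1 = 0 then 1 else 3

theorem mapRespectsDistortion_gLeft : MapRespectsDistortion gLeft :=
  mapRespectsDistortion_of_diag (by decide)

theorem mapRespectsDistortion_gRight : MapRespectsDistortion gRight :=
  mapRespectsDistortion_of_diag (by decide)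

theorem condEntYZ_jointYZdet_gLeft : condEntYZ (jointYZdet gLeft) = 2 / 3 * log 2 := by
  rw [jointYZdet_eq_jointYZ_detChannel, condEntYZ_jointYZ mapRespectsDistortion_gLeft.detChannel]
  simp only [detChannel, gLeft, Fin.isValue, Fin.reduceEq, ↓reduceIte, pairEntropy_self,
    zero_div, pairEntropy_zero_left, add_zero]
  ring

noncomputable def rMix : Fin 5 × Fin 5 → Fin 5 → ℝ :=
  fun a z => (detChannel gLeft a z + detChannel gRight a z) / 2

theorem isChannel_rMix : IsChannel rMix := by
  refine ⟨fun a z => ?_, fun a => ?_⟩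
  · have := (isChannel_detChannel gLeft).1 a z
    have := (isChannel_detChannel gRight).1 a z
    unfold rMix
    positivity
  · simp only [rMix, ← sum_div, sum_add_distrib, (isChannel_detChannel gLeft).2 a,
      (isChannel_detChannel gRight).2 a]
    norm_num

theorem respectsDistortion_rMix : RespectsDistortion rMix := by
  intro x y z hxz
  have hl := mapRespectsDistortion_gLeft.detChannel x y z hxz
  have hr := mapRespectsDistortion_gRight.detChannel x y z hxz
  simp only [rMix]
  linear_combination (hl + hr) / 2

theorem condEntYZ_jointYZ_rMix : condEntYZ (jointYZ rMix) = h2 (1 / 3) := by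
  have h := pairEntropy_mul_mul_one_sub (1 / 2) (1 - 1 / 3) (by norm_num)
  rw [h2_eq_binEntropy, binEntropy_one_sub, ← h2_eq_binEntropy] at h
  rw [condEntYZ_jointYZ respectsDistortion_rMix, pairEntropy_comm (rMix (2, 2) 3 / 3)]
  simp only [rMix, detChannel, gLeft, gRight, Fin.isValue, Fin.reduceEq, ↓reduceIte,
    add_self_div_two, add_zero, zero_add]
  norm_num at h ⊢
  linarith

theorem stochastic_attack_beats_deterministic :
    sSup {v : ℝ | ∃ r : Fin 5 × Fin 5 → Fin 5 → ℝ, IsChannel r ∧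
        (∀ x y z : Fin 5, 1 < |(x : ℤ) - (z : ℤ)| → Pex (x, y) * r (x, y) z = 0) ∧
        v = condEntYZ (jointYZ r)} = h2 (1/3) ∧
    sSup {v : ℝ | ∃ g : Fin 5 × Fin 5 → Fin 5,
        (∀ x y : Fin 5, Pex (x, y) ≠ 0 → |(x : ℤ) - (g (x, y) : ℤ)| ≤ 1) ∧
        v = condEntYZ (jointYZdet g)} = (2/3) * Real.log 2 ∧
    (2/3) * Real.log 2 < h2 (1/3) := by
  refine ⟨IsGreatest.csSup_eq ⟨?_, ?_⟩, IsGreatest.csSup_eq ⟨?_, ?_⟩,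
    two_thirds_mul_log_two_lt_h2_third⟩
  · exact ⟨rMix, isChannel_rMix, respectsDistortion_rMix, condEntYZ_jointYZ_rMix.symm⟩
  · rintro v ⟨r, hr, hd, rfl⟩
    exact condEntYZ_jointYZ_le_h2 hr hd
  · exact ⟨gLeft, mapRespectsDistortion_gLeft, condEntYZ_jointYZdet_gLeft.symm⟩
  · rintro v ⟨g, hg, rfl⟩
    exact condEntYZ_jointYZdet_le hg
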